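/- arXiv:math/0501201 — 3 statements merged into one kernel-verified Lean document; each statement's English description precedes it below -/
import Mathlib

section
/- For every 0 ≤ k < l ≤ n−1, the recurrences v_{k,l} = v_{k+1,l}·(1 − a_{k,l}·a'_{k,l}) and v'_{k,l} = v'_{k,l−1}·(1 − a_{k,l}·a'_{k,l}) hold. -/
open Matrix
open scoped ComplexOrder

noncomputable section

/-- The `k`-th standard basis vector of `ℂⁿ` (zero if `k ≥ n`). -/
def eVec (n : ℕ) (k : ℕ) : Fin n → ℂ := fun j => if (j : ℕ) = k then 1 else 0

/-- `vᵀ R w`. -/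
def bform {n : ℕ} (R : Matrix (Fin n) (Fin n) ℂ) (v w : Fin n → ℂ) : ℂ :=
  v ⬝ᵥ R.mulVec w

/-- Joint recursion computing the pair `(p_{k,k+d}, q_{k,k+d})`. -/
def pqAux {n : ℕ} (R : Matrix (Fin n) (Fin n) ℂ) : ℕ → ℕ → (Fin n → ℂ) × (Fin n → ℂ)
  | 0, k => (eVec n k, eVec n k)
  | d + 1, k =>
      let p := (pqAux R d k).1
      let q := (pqAux R d (k + 1)).2
      let l := k + d + 1
      let a := bform R p (eVec n l) / bform R q (eVec n l)
      let a' := bform R q (eVec n k) / bform R p (eVec n k)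
      (p - a • q, q - a' • p)

/-- The orthogonal polynomial `p_{k,l}`. -/
def pVec {n : ℕ} (R : Matrix (Fin n) (Fin n) ℂ) (k l : ℕ) : Fin n → ℂ :=
  (pqAux R (l - k) k).1

/-- The orthogonal polynomial `q_{k,l}`. -/
def qVec {n : ℕ} (R : Matrix (Fin n) (Fin n) ℂ) (k l : ℕ) : Fin n → ℂ :=
  (pqAux R (l - k) k).2

/-- The generalized reflection coefficient `a_{k,l}`. -/
def aCoef {n : ℕ} (R : Matrix (Fin n) (Fin n) ℂ) (k l : ℕ) : ℂ :=
  bform R (pVec R k (l - 1)) (eVec n l) / bform R (qVec R (k + 1) l) (eVec n l)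

/-- The generalized reflection coefficient `a'_{k,l}`. -/
def aCoef' {n : ℕ} (R : Matrix (Fin n) (Fin n) ℂ) (k l : ℕ) : ℂ :=
  bform R (qVec R (k + 1) l) (eVec n k) / bform R (pVec R k (l - 1)) (eVec n k)

/-- `v_{k,l} = q_{k,l}ᵀ R e_l`. -/
def vSc {n : ℕ} (R : Matrix (Fin n) (Fin n) ℂ) (k l : ℕ) : ℂ :=
  bform R (qVec R k l) (eVec n l)

/-- `v'_{k,l} = p_{k,l}ᵀ R e_k`. -/
def vSc' {n : ℕ} (R : Matrix (Fin n) (Fin n) ℂ) (k l : ℕ) : ℂ :=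
  bform R (pVec R k l) (eVec n k)

lemma bform_eVec {n : ℕ} (R : Matrix (Fin n) (Fin n) ℂ) (u : Fin n → ℂ) (i : Fin n) :
    bform R u (eVec n ↑i) = ∑ m, u m * R m i := by
  simp [bform, eVec, mulVec, dotProduct, Fin.val_eq_val]

lemma bform_sub_smul {n : ℕ} (R : Matrix (Fin n) (Fin n) ℂ) (v w u : Fin n → ℂ) (a : ℂ) :
    bform R (v - a • w) u = bform R v u - a * bform R w u := by
  simp [bform, sub_dotProduct, smul_dotProduct, smul_eq_mul]

/-- Key nondegeneracy lemma from positive definiteness. -/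
lemma key_ne {n : ℕ} {R : Matrix (Fin n) (Fin n) ℂ} (hR : R.PosDef) (u : Fin n → ℂ)
    (t : Fin n) (hut : u t = 1)
    (horth : ∀ i : Fin n, i ≠ t → u i * bform R u (eVec n ↑i) = 0) :
    bform R u (eVec n ↑t) ≠ 0 := by
  set w : Fin n → ℂ := fun i => (starRingEnd ℂ) (u i) with hwdef
  have hw : w ≠ 0 := by
    intro h
    have : w t = 0 := by rw [h]; rfl
    simp [hwdef, hut] at this
  have hcalc : star w ⬝ᵥ R.mulVec w = (starRingEnd ℂ) (bform R u (eVec n ↑t)) := by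
    have step : star w ⬝ᵥ R.mulVec w = ∑ i, u i * (starRingEnd ℂ) (bform R u (eVec n ↑i)) := by
      have : ∀ i : Fin n, (starRingEnd ℂ) (bform R u (eVec n ↑i))
          = ∑ m, (starRingEnd ℂ) (u m) * R i m := by
        intro i
        rw [bform_eVec, map_sum]
        refine Finset.sum_congr rfl fun m _ => ?_
        rw [_root_.map_mul, ← hR.1.apply i m]
        rfl
      simp only [dotProduct, mulVec, this, hwdef]
      refine Finset.sum_congr rfl fun i _ => ?_
      simp [dotProduct, Finset.mul_sum, mul_comm, mul_left_comm]
    rw [step, Finset.sum_eq_single t]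
    · rw [hut, one_mul]
    · intro i _ hit
      rcases mul_eq_zero.mp (horth i hit) with h | h
      · simp [h]
      · simp [h]
    · intro h; exact absurd (Finset.mem_univ t) h
  intro h
  have := (hR.dotProduct_mulVec_pos hw).ne'
  rw [hcalc, h] at this
  simp at this

lemma pVec_self {n : ℕ} (R : Matrix (Fin n) (Fin n) ℂ) (k : ℕ) : pVec R k k = eVec n k := by
  simp [pVec, pqAux]

lemma qVec_self {n : ℕ} (R : Matrix (Fin n) (Fin n) ℂ) (k : ℕ) : qVec R k k = eVec n k := by
  simp [qVec, pqAux]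

lemma pVec_succ {n : ℕ} (R : Matrix (Fin n) (Fin n) ℂ) (k d : ℕ) :
    pVec R k (k + d + 1) =
      pVec R k (k + d) - aCoef R k (k + d + 1) • qVec R (k + 1) (k + d + 1) := by
  have h1 : k + d + 1 - k = d + 1 := by omega
  have h2 : k + d + 1 - 1 = k + d := by omega
  have h3 : k + d - k = d := by omega
  have h4 : k + d + 1 - (k + 1) = d := by omega
  unfold pVec qVec aCoef pVec qVec
  rw [h1, h2, h3, h4, pqAux]

lemma qVec_succ {n : ℕ} (R : Matrix (Fin n) (Fin n) ℂ) (k d : ℕ) :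
    qVec R k (k + d + 1) =
      qVec R (k + 1) (k + d + 1) - aCoef' R k (k + d + 1) • pVec R k (k + d) := by
  have h1 : k + d + 1 - k = d + 1 := by omega
  have h2 : k + d + 1 - 1 = k + d := by omega
  have h3 : k + d - k = d := by omega
  have h4 : k + d + 1 - (k + 1) = d := by omega
  unfold pVec qVec aCoef' pVec qVec
  rw [h1, h2, h3, h4, pqAux]

/-- The full invariant package. -/
def LevInv {n : ℕ} (R : Matrix (Fin n) (Fin n) ℂ) (k l : ℕ) : Prop :=
  (∀ j : Fin n, ((j : ℕ) < k ∨ l < (j : ℕ)) → pVec R k l j = 0 ∧ qVec R k l j = 0) ∧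
  (∀ hk : k < n, pVec R k l ⟨k, hk⟩ = 1) ∧
  (∀ hl : l < n, qVec R k l ⟨l, hl⟩ = 1) ∧
  (∀ j : ℕ, k < j → j ≤ l → bform R (pVec R k l) (eVec n j) = 0) ∧
  (∀ j : ℕ, k ≤ j → j < l → bform R (qVec R k l) (eVec n j) = 0) ∧
  bform R (qVec R k l) (eVec n l) ≠ 0 ∧
  bform R (pVec R k l) (eVec n k) ≠ 0

lemma levInv_all {n : ℕ} (hn : 1 ≤ n) {R : Matrix (Fin n) (Fin n) ℂ} (hR : R.PosDef) :
    ∀ d k : ℕ, k + d ≤ n - 1 → LevInv R k (k + d) := by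
  intro d
  induction d with
  | zero =>
    intro k hk
    have hkn : k < n := by omega
    have hsupp : ∀ j : Fin n, ((j : ℕ) < k ∨ k + 0 < (j : ℕ)) →
        pVec R k (k + 0) j = 0 ∧ qVec R k (k + 0) j = 0 := by
      intro j hj
      have hjk : (j : ℕ) ≠ k := by omega
      constructor <;> simp [pVec_self, qVec_self, eVec, hjk]
    have htop : eVec n k ⟨k, hkn⟩ = 1 := by simp [eVec]
    have hne : bform R (eVec n k) (eVec n ↑(⟨k, hkn⟩ : Fin n)) ≠ 0 := by
      apply key_ne hR (eVec n k) ⟨k, hkn⟩ htop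
      intro i hit
      have : (i : ℕ) ≠ k := fun h => hit (Fin.ext h)
      simp [eVec, this]
    refine ⟨hsupp, ?_, ?_, ?_, ?_, ?_, ?_⟩
    · intro hk'; simp [pVec_self, eVec]
    · intro hl'; simp [qVec_self, eVec]
    · intro j h1 h2; omega
    · intro j h1 h2; omega
    · simpa [qVec_self] using hne
    · simpa [pVec_self] using hne
  | succ d IH =>
    intro k hk
    have hln : k + d + 1 < n := by omega
    have hkn : k < n := by omega
    have ih1 := IH k (by omega)
    have ih2 : LevInv R (k + 1) (k + d + 1) := by
      have := IH (k + 1) (by omega)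
      rwa [show k + 1 + d = k + d + 1 by omega] at this
    obtain ⟨supp1, ptop1, qtop1, porth1, qorth1, vne1, v'ne1⟩ := ih1
    obtain ⟨supp2, ptop2, qtop2, porth2, qorth2, vne2, v'ne2⟩ := ih2
    have ha : aCoef R k (k + d + 1) =
        bform R (pVec R k (k + d)) (eVec n (k + d + 1)) /
          bform R (qVec R (k + 1) (k + d + 1)) (eVec n (k + d + 1)) := rfl
    have ha' : aCoef' R k (k + d + 1) =
        bform R (qVec R (k + 1) (k + d + 1)) (eVec n k) /
          bform R (pVec R k (k + d)) (eVec n k) := rfl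
    have hA : aCoef R k (k + d + 1) * bform R (qVec R (k + 1) (k + d + 1)) (eVec n (k + d + 1))
        = bform R (pVec R k (k + d)) (eVec n (k + d + 1)) := by
      rw [ha]; exact div_mul_cancel₀ _ vne2
    have hC : aCoef' R k (k + d + 1) * bform R (pVec R k (k + d)) (eVec n k)
        = bform R (qVec R (k + 1) (k + d + 1)) (eVec n k) := by
      rw [ha']; exact div_mul_cancel₀ _ v'ne1
    have suppNew : ∀ j : Fin n, ((j : ℕ) < k ∨ k + d + 1 < (j : ℕ)) →
        pVec R k (k + d + 1) j = 0 ∧ qVec R k (k + d + 1) j = 0 := by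
      intro j hj
      have hp := supp1 j (by omega)
      have hq := supp2 j (by omega)
      rw [pVec_succ, qVec_succ]
      simp [hp.1, hq.2]
    have ptopNew : ∀ hk' : k < n, pVec R k (k + d + 1) ⟨k, hk'⟩ = 1 := by
      intro hk'
      have hq := supp2 ⟨k, hk'⟩ (by simp)
      rw [pVec_succ]
      simp [hq.2, ptop1 hk']
    have qtopNew : ∀ hl' : k + d + 1 < n, qVec R k (k + d + 1) ⟨k + d + 1, hl'⟩ = 1 := by
      intro hl'
      have hp := supp1 ⟨k + d + 1, hl'⟩ (by simp)
      rw [qVec_succ]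
      simp only [Pi.sub_apply, Pi.smul_apply, smul_eq_mul]
      rw [hp.1, qtop2 hl']
      ring
    have porthNew : ∀ j : ℕ, k < j → j ≤ k + d + 1 → bform R (pVec R k (k + d + 1)) (eVec n j) = 0 := by
      intro j h1 h2
      rw [pVec_succ, bform_sub_smul]
      by_cases hjl : j = k + d + 1
      · subst hjl; rw [hA]; ring
      · rw [porth1 j h1 (by omega), qorth2 j (by omega) (by omega)]; ring
    have qorthNew : ∀ j : ℕ, k ≤ j → j < k + d + 1 → bform R (qVec R k (k + d + 1)) (eVec n j) = 0 := by
      intro j h1 h2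
      rw [qVec_succ, bform_sub_smul]
      by_cases hjk : j = k
      · subst hjk; rw [hC]; ring
      · rw [qorth2 j (by omega) (by omega), porth1 j (by omega) (by omega)]; ring
    have vneNew : bform R (qVec R k (k + d + 1)) (eVec n (k + d + 1)) ≠ 0 := by
      have := key_ne hR (qVec R k (k + d + 1)) ⟨k + d + 1, hln⟩ (qtopNew hln) ?_
      · exact this
      intro i hit
      have hil : (i : ℕ) ≠ k + d + 1 := fun h => hit (Fin.ext h)
      rcases lt_or_ge (i : ℕ) k with h | h
      · rw [(suppNew i (Or.inl h)).2]; ring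
      · rcases lt_or_ge (k + d + 1) (i : ℕ) with h' | h'
        · rw [(suppNew i (Or.inr h')).2]; ring
        · rw [qorthNew (i : ℕ) h (by omega)]; ring
    have v'neNew : bform R (pVec R k (k + d + 1)) (eVec n k) ≠ 0 := by
      have := key_ne hR (pVec R k (k + d + 1)) ⟨k, hkn⟩ (ptopNew hkn) ?_
      · exact this
      intro i hit
      have hik : (i : ℕ) ≠ k := fun h => hit (Fin.ext h)
      rcases lt_or_ge (i : ℕ) k with h | h
      · rw [(suppNew i (Or.inl h)).1]; ring
      · rcases lt_or_ge (k + d + 1) (i : ℕ) with h' | h'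
        · rw [(suppNew i (Or.inr h')).1]; ring
        · rw [porthNew (i : ℕ) (by omega) h']; ring
    exact ⟨suppNew, ptopNew, qtopNew, porthNew, qorthNew, vneNew, v'neNew⟩

/-- The recurrences `v_{k,l} = v_{k+1,l}(1 - a_{k,l} a'_{k,l})` and
`v'_{k,l} = v'_{k,l-1}(1 - a_{k,l} a'_{k,l})`. -/
theorem stmt1 (n : ℕ) (hn : 1 ≤ n) (R : Matrix (Fin n) (Fin n) ℂ) (hR : R.PosDef) :
    ∀ k l : ℕ, k < l → l ≤ n - 1 →
      vSc R k l = vSc R (k + 1) l * (1 - aCoef R k l * aCoef' R k l) ∧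
      vSc' R k l = vSc' R k (l - 1) * (1 - aCoef R k l * aCoef' R k l) := by
  intro k l hkl hln
  obtain ⟨d, rfl⟩ : ∃ d, l = k + d + 1 := ⟨l - k - 1, by omega⟩
  have ih1 := levInv_all hn hR d k (by omega)
  have ih2 : LevInv R (k + 1) (k + d + 1) := by
    have := levInv_all hn hR d (k + 1) (by omega)
    rwa [show k + 1 + d = k + d + 1 by omega] at this
  obtain ⟨-, -, -, -, -, vne1, v'ne1⟩ := ih1
  obtain ⟨-, -, -, -, -, vne2, v'ne2⟩ := ih2
  set A := bform R (pVec R k (k + d)) (eVec n (k + d + 1)) with hAdef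
  set B := bform R (qVec R (k + 1) (k + d + 1)) (eVec n (k + d + 1)) with hBdef
  set C := bform R (qVec R (k + 1) (k + d + 1)) (eVec n k) with hCdef
  set D := bform R (pVec R k (k + d)) (eVec n k) with hDdef
  have ha : aCoef R k (k + d + 1) = A / B := rfl
  have ha' : aCoef' R k (k + d + 1) = C / D := rfl
  constructor
  · show bform R (qVec R k (k + d + 1)) (eVec n (k + d + 1)) = B * _
    rw [qVec_succ, bform_sub_smul, ha, ha']
    field_simp
    ring
  · show bform R (pVec R k (k + d + 1)) (eVec n k)
      = bform R (pVec R k (k + d + 1 - 1)) (eVec n k) * _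
    rw [show k + d + 1 - 1 = k + d from rfl, pVec_succ, bform_sub_smul, ha, ha']
    show D - A / B * C = D * _
    field_simp
end
end

section
/- For every 0 ≤ k < l ≤ n−1, one has p_{k,l−1}ᵀ R e_l = conj(q_{k+1,l}ᵀ R e_k) (complex conjugate). Consequently the product a_{k,l}·a'_{k,l} is a nonnegative real number strictly less than 1. -/
open Matrix
open scoped ComplexOrder

noncomputable section

lemma bform_right_expand {n : ℕ} (R : Matrix (Fin n) (Fin n) ℂ) (v w : Fin n → ℂ) :
    bform R v w = ∑ j : Fin n, w j * bform R v (eVec n (j : ℕ)) := by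
  simp only [bform, dotProduct, mulVec, eVec, Fin.val_eq_val, mul_ite, mul_one, mul_zero,
    Finset.sum_ite_eq', Finset.mem_univ, if_true, Finset.mul_sum]
  rw [Finset.sum_comm]
  apply Finset.sum_congr rfl
  intro i _
  apply Finset.sum_congr rfl
  intro j _
  ring

lemma bform_eVec_left {n : ℕ} (R : Matrix (Fin n) (Fin n) ℂ) (w : Fin n → ℂ) (i : Fin n) :
    bform R (eVec n (i : ℕ)) w = R.mulVec w i := by
  simp only [bform, dotProduct, eVec, Fin.val_eq_val, ite_mul, one_mul, zero_mul,
    Finset.sum_ite_eq, Finset.sum_ite_eq', Finset.mem_univ, if_true]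

lemma bform_left_expand {n : ℕ} (R : Matrix (Fin n) (Fin n) ℂ) (v w : Fin n → ℂ) :
    bform R v w = ∑ i : Fin n, v i * bform R (eVec n (i : ℕ)) w := by
  simp only [bform_eVec_left]
  rfl

lemma bform_sub_left {n : ℕ} (R : Matrix (Fin n) (Fin n) ℂ) (u v w : Fin n → ℂ) :
    bform R (u - v) w = bform R u w - bform R v w := by
  simp [bform, sub_dotProduct]

lemma bform_smul_left {n : ℕ} (R : Matrix (Fin n) (Fin n) ℂ) (a : ℂ) (v w : Fin n → ℂ) :
    bform R (a • v) w = a * bform R v w := by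
  simp [bform, smul_dotProduct]

lemma bform_star {n : ℕ} {R : Matrix (Fin n) (Fin n) ℂ} (hR : R.IsHermitian)
    (v w : Fin n → ℂ) : star (bform R v w) = bform R (star w) (star v) := by
  simp only [bform, dotProduct, mulVec, Finset.mul_sum, star_sum, star_mul', Pi.star_apply]
  rw [Finset.sum_comm]
  apply Finset.sum_congr rfl
  intro j _
  apply Finset.sum_congr rfl
  intro i _
  have : star (R i j) = R j i := by
    conv_rhs => rw [← hR]
    simp [conjTranspose_apply]
  rw [this]; ring

lemma star_eVec {n : ℕ} (j : ℕ) : star (eVec n j) = eVec n j := by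
  funext i
  simp only [Pi.star_apply, eVec]
  split <;> simp

lemma bform_pos {n : ℕ} {R : Matrix (Fin n) (Fin n) ℂ} (hR : R.PosDef) (p : Fin n → ℂ)
    (m : ℕ) (hm : m < n) (hpm : p ⟨m, hm⟩ = 1)
    (hvanish : ∀ j : Fin n, j ≠ ⟨m, hm⟩ → (p j = 0 ∨ bform R p (eVec n (j : ℕ)) = 0)) :
    0 < bform R p (eVec n m) ∧ bform R p (star p) = bform R p (eVec n m) := by
  have h1 : bform R p (star p) = bform R p (eVec n m) := by
    rw [bform_right_expand]
    rw [Finset.sum_eq_single (⟨m, hm⟩ : Fin n)]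
    · simp [hpm]
    · intro j _ hj
      rcases hvanish j hj with h | h
      · simp [h]
      · simp [h]
    · simp
  have hne : star p ≠ 0 := by
    intro h0
    have : (star p) ⟨m, hm⟩ = 0 := by rw [h0]; rfl
    rw [Pi.star_apply, hpm] at this
    simp at this
  have h2 : 0 < bform R p (star p) := by
    have := hR.dotProduct_mulVec_pos hne
    simpa [bform, star_star] using this
  exact ⟨h1 ▸ h2, h1⟩

lemma key {n : ℕ} {R : Matrix (Fin n) (Fin n) ℂ} (hR : R.PosDef) (k l : ℕ)
    (hk : k < l) (hl : l < n) (p q : Fin n → ℂ)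
    (hp0 : ∀ j : Fin n, ((j : ℕ) < k ∨ l ≤ (j : ℕ)) → p j = 0)
    (hpk : ∀ j : Fin n, (j : ℕ) = k → p j = 1)
    (hpo : ∀ j : ℕ, k < j → j < l → bform R p (eVec n j) = 0)
    (hq0 : ∀ j : Fin n, ((j : ℕ) ≤ k ∨ l < (j : ℕ)) → q j = 0)
    (hql : ∀ j : Fin n, (j : ℕ) = l → q j = 1)
    (hqo : ∀ j : ℕ, k < j → j < l → bform R q (eVec n j) = 0) :
    bform R p (eVec n l) = star (bform R q (eVec n k)) ∧
    0 ≤ (bform R p (eVec n l) / bform R q (eVec n l)) *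
        (bform R q (eVec n k) / bform R p (eVec n k)) ∧
    (bform R p (eVec n l) / bform R q (eVec n l)) *
        (bform R q (eVec n k) / bform R p (eVec n k)) < 1 := by
  have hkn : k < n := hk.trans hl
  set lF : Fin n := ⟨l, hl⟩ with hlF
  set kF : Fin n := ⟨k, hkn⟩ with hkF
  set c : ℂ := bform R p (star q) with hc
  -- c = bform R p (eVec n l)
  have hc1 : c = bform R p (eVec n l) := by
    rw [hc, bform_right_expand, Finset.sum_eq_single lF]
    · have : q lF = 1 := hql lF rfl
      simp [this]; rfl
    · intro j _ hj
      have hjl : (j : ℕ) ≠ l := fun h => hj (Fin.ext h)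
      by_cases h1 : (j : ℕ) ≤ k ∨ l < (j : ℕ)
      · simp [hq0 j h1]
      · push_neg at h1
        rw [hpo (j : ℕ) h1.1 (lt_of_le_of_ne h1.2 hjl), mul_zero]
    · simp
  -- c = star (bform R q (eVec n k))
  have hstar : ∀ (v : Fin n → ℂ) (j : ℕ), star (bform R v (eVec n j)) = bform R (eVec n j) (star v) := by
    intro v j
    rw [bform_star hR.1, star_eVec]
  have hc2 : c = star (bform R q (eVec n k)) := by
    rw [hstar q k, hc, bform_left_expand R p (star q), Finset.sum_eq_single kF]
    · have : p kF = 1 := hpk kF rfl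
      simp [this]; rfl
    · intro j _ hj
      have hjk : (j : ℕ) ≠ k := fun h => hj (Fin.ext h)
      by_cases h1 : (j : ℕ) < k ∨ l ≤ (j : ℕ)
      · simp [hp0 j h1]
      · push_neg at h1
        have h2 : k < (j : ℕ) := lt_of_le_of_ne h1.1 (Ne.symm hjk)
        rw [← hstar q (j : ℕ), hqo (j : ℕ) h2 h1.2, star_zero, mul_zero]
    · simp
  have part1 : bform R p (eVec n l) = star (bform R q (eVec n k)) := hc1 ▸ hc2
  -- positivity of the two diagonal terms
  have hqpos : 0 < bform R q (eVec n l) ∧ bform R q (star q) = bform R q (eVec n l) := by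
    refine bform_pos hR q l hl (hql lF rfl) ?_
    intro j hj
    have hjl : (j : ℕ) ≠ l := fun h => hj (Fin.ext h)
    by_cases h1 : (j : ℕ) ≤ k ∨ l < (j : ℕ)
    · exact Or.inl (hq0 j h1)
    · push_neg at h1
      exact Or.inr (hqo (j : ℕ) h1.1 (lt_of_le_of_ne h1.2 hjl))
  have hppos : 0 < bform R p (eVec n k) ∧ bform R p (star p) = bform R p (eVec n k) := by
    refine bform_pos hR p k hkn (hpk kF rfl) ?_
    intro j hj
    have hjk : (j : ℕ) ≠ k := fun h => hj (Fin.ext h)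
    by_cases h1 : (j : ℕ) < k ∨ l ≤ (j : ℕ)
    · exact Or.inl (hp0 j h1)
    · push_neg at h1
      exact Or.inr (hpo (j : ℕ) (lt_of_le_of_ne h1.1 (Ne.symm hjk)) h1.2)
  -- real values
  obtain ⟨hv, hvq⟩ := hqpos
  obtain ⟨hv', hvp⟩ := hppos
  set α : ℝ := (bform R q (eVec n l)).re with hαdef
  set β : ℝ := (bform R p (eVec n k)).re with hβdef
  have hα : 0 < α := by
    have := hv
    rw [Complex.lt_def] at this
    simpa using this.1
  have hβ : 0 < β := by
    have := hv'
    rw [Complex.lt_def] at this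
    simpa using this.1
  have hvα : bform R q (eVec n l) = (α : ℂ) := by
    have := hv
    rw [Complex.lt_def] at this
    apply Complex.ext
    · simp [hαdef]
    · simp [← this.2]
  have hvβ : bform R p (eVec n k) = (β : ℂ) := by
    have := hv'
    rw [Complex.lt_def] at this
    apply Complex.ext
    · simp [hβdef]
    · simp [← this.2]
  -- Cauchy-Schwarz via the vector z
  set z : Fin n → ℂ := (β : ℂ) • star q - c • star p with hz
  have hzl : z lF = (β : ℂ) := by
    have h1 : q lF = 1 := hql lF rfl
    have h2 : p lF = 0 := hp0 lF (Or.inr le_rfl)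
    simp [hz, h1, h2]
  have hzne : z ≠ 0 := by
    intro h0
    rw [h0] at hzl
    exact (Complex.ofReal_ne_zero.mpr hβ.ne') hzl.symm
  have hposz : 0 < bform R (star z) z := by
    have := hR.dotProduct_mulVec_pos hzne
    simpa [bform] using this
  -- compute bform R (star z) z
  have hstarz : star z = (β : ℂ) • q - (star c) • p := by
    rw [hz]
    ext i
    simp [mul_comm]
  have hqsp : bform R q (star p) = star c := by
    rw [hc, bform_star hR.1, star_star]
  have hpsq : bform R p (star q) = c := hc.symm
  have hqq : bform R q (star q) = (α : ℂ) := hvq.trans hvα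
  have hpp : bform R p (star p) = (β : ℂ) := hvp.trans hvβ
  have hexpand : bform R (star z) z = (β : ℂ) * ((β : ℂ) * (α : ℂ) - c * star c) := by
    rw [hstarz, hz]
    have e1 : bform R ((β : ℂ) • q - (star c) • p) ((β:ℂ) • star q - c • star p)
        = (β:ℂ) * ((β:ℂ) * bform R q (star q) - c * bform R q (star p))
          - star c * ((β:ℂ) * bform R p (star q) - c * bform R p (star p)) := by
      simp only [bform, sub_dotProduct, smul_dotProduct, mulVec_smul, dotProduct_smul,
        mulVec_sub, dotProduct_sub, smul_eq_mul]
      ring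
    rw [e1, hqq, hqsp, hpsq, hpp]
    ring
  have hcc : c * star c = (Complex.normSq c : ℂ) := by
    rw [Complex.star_def, Complex.mul_conj]
  have hcs : Complex.normSq c < α * β := by
    have h1 : (0 : ℂ) < (β : ℂ) * ((β : ℂ) * (α : ℂ) - (Complex.normSq c : ℂ)) := by
      rw [← hcc, ← hexpand]; exact hposz
    have h2 : (0 : ℝ) < β * (β * α - Complex.normSq c) := by
      have := h1
      rw [show ((β:ℂ) * ((β:ℂ)*(α:ℂ) - (Complex.normSq c : ℂ))) = ((β * (β * α - Complex.normSq c) : ℝ) : ℂ) by push_cast; ring] at this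
      exact_mod_cast this
    nlinarith
  -- final manipulation
  have hbqk : bform R q (eVec n k) = star c := by
    rw [hc2]; simp
  have hprod : (bform R p (eVec n l) / bform R q (eVec n l)) *
      (bform R q (eVec n k) / bform R p (eVec n k))
      = ((Complex.normSq c / (α * β) : ℝ) : ℂ) := by
    rw [← hc1, hbqk, hvα, hvβ, div_mul_div_comm, hcc]
    push_cast
    ring
  refine ⟨part1, ?_, ?_⟩
  · rw [hprod]
    have : (0:ℝ) ≤ Complex.normSq c / (α * β) :=
      div_nonneg (Complex.normSq_nonneg c) (by positivity)
    exact_mod_cast this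
  · rw [hprod]
    have : Complex.normSq c / (α * β) < 1 := by
      rw [div_lt_one (by positivity)]
      exact hcs
    calc ((Complex.normSq c / (α * β) : ℝ) : ℂ) < ((1:ℝ):ℂ) := by exact_mod_cast this
      _ = 1 := by norm_num

lemma pqAux_props {n : ℕ} {R : Matrix (Fin n) (Fin n) ℂ} (hR : R.PosDef) :
    ∀ d k : ℕ, k + d < n →
      ((∀ j : Fin n, ((j : ℕ) < k ∨ k + d < (j : ℕ)) → (pqAux R d k).1 j = 0) ∧
       (∀ j : Fin n, (j : ℕ) = k → (pqAux R d k).1 j = 1) ∧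
       (∀ j : ℕ, k < j → j ≤ k + d → bform R (pqAux R d k).1 (eVec n j) = 0)) ∧
      ((∀ j : Fin n, ((j : ℕ) < k ∨ k + d < (j : ℕ)) → (pqAux R d k).2 j = 0) ∧
       (∀ j : Fin n, (j : ℕ) = k + d → (pqAux R d k).2 j = 1) ∧
       (∀ j : ℕ, k ≤ j → j < k + d → bform R (pqAux R d k).2 (eVec n j) = 0)) := by
  intro d
  induction d with
  | zero =>
    intro k hk
    refine ⟨⟨?_, ?_, ?_⟩, ⟨?_, ?_, ?_⟩⟩
    · intro j hj; show eVec n k j = 0; unfold eVec; rw [if_neg (by omega)]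
    · intro j hj; show eVec n k j = 1; unfold eVec; rw [if_pos hj]
    · intro j h1 h2; omega
    · intro j hj; show eVec n k j = 0; unfold eVec; rw [if_neg (by omega)]
    · intro j hj; show eVec n k j = 1; unfold eVec; rw [if_pos (by omega)]
    · intro j h1 h2; omega
  | succ d ih =>
    intro k hk
    have hk1 : k + d < n := by omega
    have hk2 : (k + 1) + d < n := by omega
    obtain ⟨⟨hp0, hpk, hpo⟩, -⟩ := ih k hk1
    obtain ⟨-, ⟨hq0, hql, hqo⟩⟩ := ih (k + 1) hk2
    set p := (pqAux R d k).1 with hpdef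
    set q := (pqAux R d (k + 1)).2 with hqdef
    set l := k + d + 1 with hldef
    have hln : l < n := by omega
    -- positivity of denominators
    have hqpos : 0 < bform R q (eVec n l) := by
      refine (bform_pos hR q l hln (hql ⟨l, hln⟩ (by simp [hldef]; omega)) ?_).1
      intro j hj
      have hjl : (j : ℕ) ≠ l := fun h => hj (Fin.ext h)
      by_cases h1 : (j : ℕ) < k + 1 ∨ (k + 1) + d < (j : ℕ)
      · exact Or.inl (hq0 j h1)
      · push_neg at h1
        exact Or.inr (hqo (j : ℕ) h1.1 (by omega))
    have hppos : 0 < bform R p (eVec n k) := by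
      have hknn : k < n := by omega
      refine (bform_pos hR p k hknn (hpk ⟨k, hknn⟩ rfl) ?_).1
      intro j hj
      have hjk : (j : ℕ) ≠ k := fun h => hj (Fin.ext h)
      by_cases h1 : (j : ℕ) < k ∨ k + d < (j : ℕ)
      · exact Or.inl (hp0 j h1)
      · push_neg at h1
        exact Or.inr (hpo (j : ℕ) (by omega) h1.2)
    have hunfold : pqAux R (d + 1) k =
        (p - (bform R p (eVec n l) / bform R q (eVec n l)) • q,
         q - (bform R q (eVec n k) / bform R p (eVec n k)) • p) := by
      rw [pqAux]
    rw [hunfold]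
    set a := bform R p (eVec n l) / bform R q (eVec n l) with hadef
    set a' := bform R q (eVec n k) / bform R p (eVec n k) with ha'def
    refine ⟨⟨?_, ?_, ?_⟩, ⟨?_, ?_, ?_⟩⟩
    · intro j hj
      have h1 : p j = 0 := hp0 j (by omega)
      have h2 : q j = 0 := hq0 j (by omega)
      simp [h1, h2]
    · intro j hj
      have h1 : p j = 1 := hpk j hj
      have h2 : q j = 0 := hq0 j (by omega)
      simp [h1, h2]
    · intro j h1 h2
      rw [bform_sub_left, bform_smul_left]
      rcases Nat.lt_or_ge j l with h3 | h3
      · rw [hpo j h1 (by omega), hqo j (by omega) (by omega), mul_zero, sub_zero]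
      · have hjl : j = l := by omega
        rw [hjl, hadef, div_mul_cancel₀ _ hqpos.ne', sub_self]
    · intro j hj
      have h1 : p j = 0 := hp0 j (by omega)
      have h2 : q j = 0 := hq0 j (by omega)
      simp [h1, h2]
    · intro j hj
      have h1 : q j = 1 := hql j (by omega)
      have h2 : p j = 0 := hp0 j (by omega)
      simp [h1, h2]
    · intro j h1 h2
      rw [bform_sub_left, bform_smul_left]
      rcases Nat.lt_or_ge k j with h3 | h3
      · rw [hqo j (by omega) (by omega), hpo j h3 (by omega), mul_zero, sub_zero]
      · have hjk : j = k := by omega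
        rw [hjk, ha'def, div_mul_cancel₀ _ hppos.ne', sub_self]

/-- `p_{k,l-1}ᵀ R e_l = conj (q_{k+1,l}ᵀ R e_k)`, and the product `a_{k,l} a'_{k,l}` is a
nonnegative real number strictly less than `1` (stated via the complex partial order). -/
theorem stmt2 (n : ℕ) (hn : 1 ≤ n) (R : Matrix (Fin n) (Fin n) ℂ) (hR : R.PosDef) :
    ∀ k l : ℕ, k < l → l ≤ n - 1 →
      bform R (pVec R k (l - 1)) (eVec n l)
        = (starRingEnd ℂ) (bform R (qVec R (k + 1) l) (eVec n k)) ∧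
      0 ≤ aCoef R k l * aCoef' R k l ∧ aCoef R k l * aCoef' R k l < 1 := by
  intro k l hkl hln
  have hl : l < n := by omega
  have e1 : pVec R k (l - 1) = (pqAux R (l - 1 - k) k).1 := rfl
  have e2 : qVec R (k + 1) l = (pqAux R (l - 1 - k) (k + 1)).2 := by
    unfold qVec
    congr 2
    omega
  obtain ⟨⟨hp0, hpk, hpo⟩, -⟩ := pqAux_props hR (l - 1 - k) k (by omega)
  obtain ⟨-, hq0, hql, hqo⟩ := pqAux_props hR (l - 1 - k) (k + 1) (by omega)
  have main := key hR k l hkl hl (pVec R k (l - 1)) (qVec R (k + 1) l)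
    (fun j hj => by rw [e1]; exact hp0 j (by omega))
    (fun j hj => by rw [e1]; exact hpk j hj)
    (fun j h1 h2 => by rw [e1]; exact hpo j h1 (by omega))
    (fun j hj => by rw [e2]; exact hq0 j (by omega))
    (fun j hj => by rw [e2]; exact hql j (by omega))
    (fun j h1 h2 => by rw [e2]; exact hqo j (by omega) (by omega))
  exact ⟨main.1, main.2.1, main.2.2⟩
end
end

section
/- (Theorem 1, polynomials) If R is an N×N Hermitian positive definite matrix that is block Toeplitz with block size n1, then for all 0 ≤ k < l ≤ N−1: p_{k,l} = U^{k sec n1} p_{k mod n1, l − (k sec n1)} and q_{k,l} = U^{k sec n1} q_{k mod n1, l − (k sec n1)}, where U is the N×N lower shift matrix (U_{i,j} = 1 if i = j+1 and 0 otherwise, so (U^m x)_i = x_{i−m} for i ≥ m and 0 otherwise). -/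
open Matrix
open scoped ComplexOrder

noncomputable section

/-- The `N × N` lower shift matrix `U` (`U_{i,j} = 1` iff `i = j + 1`). -/
def shiftU (N : ℕ) : Matrix (Fin N) (Fin N) ℂ :=
  Matrix.of fun i j => if (i : ℕ) = (j : ℕ) + 1 then 1 else 0


/-!
Block Toeplitz structure with block size `s` says that `bform R (U^s v) (U^s w) = bform R v w`
for vectors `v, w` supported below index `N - s`. The recursion started at `k + s` only ever
evaluates such forms on the `U^s`-shifts of the vectors of the recursion started at `k`, all of
which are supported up to index `l`; so by induction on `l - k` it produces their shifts. Block
size `n1` implies block size `n1 * (k / n1)`, which moves `k % n1` to `k`.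
-/

section

variable {α : Type*} {N : ℕ}

def IsBlockToeplitz (s : ℕ) (R : Matrix (Fin N) (Fin N) α) : Prop :=
  ∀ (i j : ℕ) (hi : i + s < N) (hj : j + s < N),
    R ⟨i + s, hi⟩ ⟨j + s, hj⟩ = R ⟨i, by omega⟩ ⟨j, by omega⟩

theorem IsBlockToeplitz.mul {s : ℕ} {R : Matrix (Fin N) (Fin N) α}
    (hR : IsBlockToeplitz s R) (q : ℕ) : IsBlockToeplitz (s * q) R := by
  induction q with
  | zero => intro i j _ _; rfl
  | succ q ih =>
    intro i j hi hj
    have hi' : i + s * q + s < N := by rw [Nat.mul_succ] at hi; omega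
    have hj' : j + s * q + s < N := by rw [Nat.mul_succ] at hj; omega
    calc R ⟨i + s * (q + 1), hi⟩ ⟨j + s * (q + 1), hj⟩
        = R ⟨i + s * q + s, hi'⟩ ⟨j + s * q + s, hj'⟩ := by simp only [Nat.mul_succ, add_assoc]
      _ = R ⟨i, _⟩ ⟨j, _⟩ := (hR _ _ hi' hj').trans (ih i j _ _)

theorem shiftU_mulVec_apply (v : Fin N → ℂ) (i : Fin N) :
    (shiftU N *ᵥ v) i = if h : 1 ≤ (i : ℕ) then v ⟨i - 1, by omega⟩ else 0 := by
  simp only [mulVec, dotProduct, shiftU, of_apply, ite_mul, one_mul, zero_mul]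
  split_ifs with hi
  · have hj : ∀ j : Fin N, (i : ℕ) = j + 1 ↔ j = ⟨i - 1, by omega⟩ := fun j => by
      simp only [Fin.ext_iff]; omega
    simp only [hj, Finset.sum_ite_eq', Finset.mem_univ, if_true]
  · simp [show ∀ j : ℕ, (i : ℕ) ≠ j + 1 by omega]

theorem shiftU_pow_mulVec_apply (m : ℕ) (v : Fin N → ℂ) (i : Fin N) :
    (shiftU N ^ m *ᵥ v) i = if h : m ≤ (i : ℕ) then v ⟨i - m, by omega⟩ else 0 := by
  induction m generalizing i with
  | zero => simp
  | succ m ih =>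
    rw [pow_succ', ← mulVec_mulVec, shiftU_mulVec_apply]
    split_ifs with h1 h2 h2
    · rw [ih, dif_pos (by simp; omega)]
      simp only [Nat.sub_sub, Nat.add_comm 1 m]
    · rw [ih, dif_neg (by simp; omega)]
    · omega
    · rfl

theorem shiftU_pow_mulVec_eVec (m k : ℕ) : shiftU N ^ m *ᵥ eVec N k = eVec N (k + m) := by
  funext i
  rw [shiftU_pow_mulVec_apply]
  simp only [eVec]
  split_ifs <;> first | rfl | omega

theorem shiftU_pow_mulVec_dotProduct (m : ℕ) (v w : Fin N → ℂ) :
    (shiftU N ^ m *ᵥ v) ⬝ᵥ w = v ⬝ᵥ fun j => if h : j + m < N then w ⟨j + m, h⟩ else 0 := by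
  simp only [dotProduct, shiftU_pow_mulVec_apply, dite_mul, zero_mul, mul_dite, mul_zero]
  have le_of_ne_zero : ∀ i : Fin N, ∀ {x : m ≤ i → ℂ}, (if h : m ≤ (i : ℕ) then x h else 0) ≠ 0 →
      m ≤ (i : ℕ) := fun i _ hx => by_contra fun h => hx (dif_neg h)
  refine Finset.sum_bij_ne_zero (fun i _ _ => ⟨i - m, by omega⟩) (by simp) ?_ ?_ ?_
  · intro i₁ _ h₁ i₂ _ h₂ h
    have := le_of_ne_zero i₁ h₁
    have := le_of_ne_zero i₂ h₂
    simp only [Fin.ext_iff] at h ⊢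
    omega
  · intro j _ hj
    have hjm : (j : ℕ) + m < N := by_contra fun h => hj (dif_neg h)
    exact ⟨⟨j + m, hjm⟩, Finset.mem_univ _, by simpa [hjm] using hj, by simp⟩
  · intro i _ hi
    have hmi := le_of_ne_zero i hi
    simp only [dif_pos hmi, dif_pos (show (i : ℕ) - m + m < N by omega)]
    congr 2
    simp only [Fin.ext_iff]
    omega

theorem bform_shiftU_pow_mulVec {s m : ℕ} {R : Matrix (Fin N) (Fin N) ℂ}
    (hR : IsBlockToeplitz s R) (hm : m + s < N) {v w : Fin N → ℂ}
    (hv : ∀ j : Fin N, m < j → v j = 0) (hw : ∀ j : Fin N, m < j → w j = 0) :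
    bform R (shiftU N ^ s *ᵥ v) (shiftU N ^ s *ᵥ w) = bform R v w := by
  rw [bform, bform, shiftU_pow_mulVec_dotProduct]
  refine Finset.sum_congr rfl fun i _ => ?_
  by_cases hi : (i : ℕ) ≤ m
  · simp only [dif_pos (show (i : ℕ) + s < N by omega), mulVec]
    rw [dotProduct_comm, shiftU_pow_mulVec_dotProduct, dotProduct_comm (fun j => R i j)]
    refine congrArg _ (Finset.sum_congr rfl fun j _ => ?_)
    by_cases hj : (j : ℕ) ≤ m
    · simp only [dif_pos (show (j : ℕ) + s < N by omega)]
      rw [hR i j]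
    · rw [hw j (by omega), zero_mul, zero_mul]
  · rw [hv i (by omega), zero_mul, zero_mul]

theorem pqAux_apply_eq_zero (R : Matrix (Fin N) (Fin N) ℂ) {d k : ℕ} {j : Fin N}
    (hj : k + d < j) : (pqAux R d k).1 j = 0 ∧ (pqAux R d k).2 j = 0 := by
  induction d generalizing k with
  | zero => exact ⟨if_neg (by omega), if_neg (by omega)⟩
  | succ d ih =>
    obtain ⟨hp, -⟩ := ih (k := k) (by omega)
    obtain ⟨-, hq⟩ := ih (k := k + 1) (by omega)
    simp [pqAux, hp, hq]

theorem pqAux_add_of_isBlockToeplitz {s : ℕ} {R : Matrix (Fin N) (Fin N) ℂ}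
    (hR : IsBlockToeplitz s R) (d k : ℕ) (h : k + d + s < N) :
    pqAux R d (k + s) = Prod.map (shiftU N ^ s *ᵥ ·) (shiftU N ^ s *ᵥ ·) (pqAux R d k) := by
  induction d generalizing k with
  | zero => simp only [pqAux, Prod.map, shiftU_pow_mulVec_eVec]
  | succ d ih =>
    have hp : (pqAux R d (k + s)).1 = shiftU N ^ s *ᵥ (pqAux R d k).1 :=
      congrArg Prod.fst (ih k (by omega))
    have hq : (pqAux R d (k + s + 1)).2 = shiftU N ^ s *ᵥ (pqAux R d (k + 1)).2 := by
      rw [add_right_comm]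
      exact congrArg Prod.snd (ih (k + 1) (by omega))
    have hl : eVec N (k + s + d + 1) = shiftU N ^ s *ᵥ eVec N (k + d + 1) := by
      rw [shiftU_pow_mulVec_eVec]
      congr 1
      omega
    have hk : eVec N (k + s) = shiftU N ^ s *ᵥ eVec N k := (shiftU_pow_mulVec_eVec s k).symm
    have hm : k + d + 1 + s < N := by omega
    have sp : ∀ j : Fin N, k + d + 1 < j → (pqAux R d k).1 j = 0 :=
      fun j hj => (pqAux_apply_eq_zero R (by omega)).1
    have sq : ∀ j : Fin N, k + d + 1 < j → (pqAux R d (k + 1)).2 j = 0 :=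
      fun j hj => (pqAux_apply_eq_zero R (by omega)).2
    have sl : ∀ j : Fin N, k + d + 1 < j → eVec N (k + d + 1) j = 0 :=
      fun j hj => if_neg (by omega)
    have sk : ∀ j : Fin N, k + d + 1 < j → eVec N k j = 0 :=
      fun j hj => if_neg (by omega)
    simp only [pqAux, hp, hq, hl, hk, bform_shiftU_pow_mulVec hR hm sp sl,
      bform_shiftU_pow_mulVec hR hm sq sl, bform_shiftU_pow_mulVec hR hm sq sk,
      bform_shiftU_pow_mulVec hR hm sp sk, Prod.map, mulVec_sub, mulVec_smul]

end

theorem stmt12_general (n1 n2 : ℕ)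
    (R : Matrix (Fin (n1 * n2)) (Fin (n1 * n2)) ℂ)
    (hBT : ∀ (i j : ℕ) (hi : i + n1 < n1 * n2) (hj : j + n1 < n1 * n2),
      R ⟨i + n1, hi⟩ ⟨j + n1, hj⟩ =
        R ⟨i, Nat.lt_of_le_of_lt (Nat.le_add_right i n1) hi⟩
          ⟨j, Nat.lt_of_le_of_lt (Nat.le_add_right j n1) hj⟩) :
    ∀ k l : ℕ, k < l → l ≤ n1 * n2 - 1 →
      pVec R k l =
        (shiftU (n1 * n2) ^ (n1 * (k / n1))).mulVec (pVec R (k % n1) (l - n1 * (k / n1))) ∧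
      qVec R k l =
        (shiftU (n1 * n2) ^ (n1 * (k / n1))).mulVec (qVec R (k % n1) (l - n1 * (k / n1))) := by
  intro k l hkl hl
  have hT : IsBlockToeplitz n1 R := hBT
  have hk : k % n1 + n1 * (k / n1) = k := Nat.mod_add_div k n1
  have hd : l - n1 * (k / n1) - k % n1 = l - k := by omega
  have key := pqAux_add_of_isBlockToeplitz (hT.mul (k / n1)) (l - k) (k % n1) (by omega)
  rw [hk] at key
  rw [pVec, pVec, qVec, qVec, hd, key]
  exact ⟨rfl, rfl⟩

/-- Theorem 1 (polynomials): for a Hermitian positive definite block-Toeplitz matrix with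
block size `n1`, `p_{k,l} = U^{k sec n1} p_{k mod n1, l - (k sec n1)}` and
`q_{k,l} = U^{k sec n1} q_{k mod n1, l - (k sec n1)}`, where `U` is the lower shift matrix
and `k sec n1 = n1 * (k / n1)`. -/
theorem stmt12 (n1 n2 : ℕ) (h1 : 1 ≤ n1) (h2 : 1 ≤ n2)
    (R : Matrix (Fin (n1 * n2)) (Fin (n1 * n2)) ℂ) (hR : R.PosDef)
    (hBT : ∀ (i j : ℕ) (hi : i + n1 < n1 * n2) (hj : j + n1 < n1 * n2),
      R ⟨i + n1, hi⟩ ⟨j + n1, hj⟩ =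
        R ⟨i, Nat.lt_of_le_of_lt (Nat.le_add_right i n1) hi⟩
          ⟨j, Nat.lt_of_le_of_lt (Nat.le_add_right j n1) hj⟩) :
    ∀ k l : ℕ, k < l → l ≤ n1 * n2 - 1 →
      pVec R k l =
        (shiftU (n1 * n2) ^ (n1 * (k / n1))).mulVec (pVec R (k % n1) (l - n1 * (k / n1))) ∧
      qVec R k l =
        (shiftU (n1 * n2) ^ (n1 * (k / n1))).mulVec (qVec R (k % n1) (l - n1 * (k / n1))) :=
  stmt12_general n1 n2 R hBT
end
end
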